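/- If lim_{n→∞} E[X̄_n] = μ with μ ≠ S and lim_{n→∞} Var[X̄_n] = 0, then lim_{n→∞} P_e^{(n)} = 0. -/

import Mathlib

open MeasureTheory Filter Real ProbabilityTheory

/-! If `|X̄ₙ - μ| < |μ - S| / 2` and `|Ȳₙ - (1 - 2p) X̄ₙ| < (1 - 2p) |μ - S| / 2`, then
`X̄ₙ - S` and `Ȳₙ - (1 - 2p) S` have the same sign, so an error forces one of these two deviations.
The first has vanishing probability by Chebyshev's inequality. For the second, conditionally on `X`
the variables `Yᵢ - (1 - 2p) Xᵢ` are independent and centred; hence they are uncorrelated, each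
has variance at most `4`, so `Var[Ȳₙ - (1 - 2p) X̄ₙ] ≤ 4 / n` and Chebyshev applies again. -/

section Probability

variable {Ω : Type*} [MeasurableSpace Ω] {P : Measure Ω}

theorem integral_comp_eq_sum_of_mem {α : Type*} [MeasurableSpace α] [MeasurableSingletonClass α]
    [IsFiniteMeasure P] {Z : Ω → α} (hZ : Measurable Z) {s : Finset α} (hs : ∀ ω, Z ω ∈ s)
    (f : α → ℝ) : ∫ ω, f (Z ω) ∂P = ∑ z ∈ s, P.real (Z ⁻¹' {z}) * f z := by
  have hsum : ∀ ω, f (Z ω) = ∑ z ∈ s, (Z ⁻¹' {z}).indicator (fun _ => f z) ω := by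
    intro ω
    rw [Finset.sum_eq_single_of_mem (Z ω) (hs ω) fun z _ hz => ?_]
    · simp
    · simp [Ne.symm hz]
  have hmeas : ∀ z, MeasurableSet (Z ⁻¹' {z}) := fun z => hZ (measurableSet_singleton z)
  simp_rw [hsum]
  rw [integral_finsetSum _ fun z _ => (integrable_const _).indicator (hmeas z)]
  simp_rw [integral_indicator_const _ (hmeas _), smul_eq_mul]

theorem memLp_sum_div {ι : Type*} {q : ENNReal} {s : Finset ι} {Z : ι → Ω → ℝ}
    (hZ : ∀ i ∈ s, MemLp (Z i) q P) (c : ℝ) : MemLp (fun ω => (∑ i ∈ s, Z i ω) / c) q P := by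
  simpa only [div_eq_mul_inv] using (memLp_finsetSum s hZ).mul_const c⁻¹

theorem variance_fun_sum_of_pairwise_covariance_eq_zero {ι : Type*} [IsFiniteMeasure P]
    [Fintype ι] {Z : ι → Ω → ℝ} (hZ : ∀ i, MemLp (Z i) 2 P)
    (hcov : Pairwise fun i j => cov[Z i, Z j; P] = 0) :
    Var[fun ω => ∑ i, Z i ω; P] = ∑ i, Var[Z i; P] := by
  rw [variance_fun_sum hZ]
  refine Finset.sum_congr rfl fun i _ => ?_
  rw [Finset.sum_eq_single i (fun j _ hji => hcov hji.symm) (by simp),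
    covariance_self (hZ i).aemeasurable]

theorem tendstoInMeasure_const_of_tendsto_variance {ι : Type*} [IsFiniteMeasure P]
    {l : Filter ι} {Z : ι → Ω → ℝ} {m : ℝ} (hZ : ∀ i, MemLp (Z i) 2 P)
    (hmean : Tendsto (fun i => P[Z i]) l (nhds m))
    (hvar : Tendsto (fun i => Var[Z i; P]) l (nhds 0)) :
    TendstoInMeasure P Z l fun _ => m := by
  rw [tendstoInMeasure_iff_norm]
  intro ε hε
  have hbound : Tendsto (fun i => ENNReal.ofReal (Var[Z i; P] / (ε / 2) ^ 2)) l (nhds 0) := by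
    simpa using ENNReal.tendsto_ofReal (hvar.div_const ((ε / 2) ^ 2))
  refine tendsto_of_tendsto_of_tendsto_of_le_of_le' tendsto_const_nhds hbound
    (Eventually.of_forall fun _ => zero_le) ?_
  filter_upwards [Metric.tendsto_nhds.1 hmean (ε / 2) (half_pos hε)] with i hi
  refine (measure_mono fun ω hω => ?_).trans (meas_ge_le_variance_div_sq (hZ i) (half_pos hε))
  simp only [Set.mem_ofPred_eq, Real.norm_eq_abs, Real.dist_eq] at hω hi ⊢
  linarith [abs_sub_le (Z i ω) (P[Z i]) m]

end Probability

theorem Finset.sum_piFinset_prod_mul_prod_eq_zero {ι R : Type*} [Fintype ι] [DecidableEq ι]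
    [CommSemiring R] {κ : ι → Type*} (t : ∀ i, Finset (κ i)) (q g : ∀ i, κ i → R)
    {s : Finset ι} {i : ι} (hi : i ∈ s) (h : ∑ a ∈ t i, q i a * g i a = 0) :
    ∑ y ∈ Fintype.piFinset t, (∏ k, q k (y k)) * ∏ k ∈ s, g k (y k) = 0 := by
  have hfactor : ∀ y : ∀ k, κ k, (∏ k, q k (y k)) * ∏ k ∈ s, g k (y k)
      = ∏ k, q k (y k) * if k ∈ s then g k (y k) else 1 := by
    intro y
    rw [Finset.prod_mul_distrib, Finset.prod_ite_mem, Finset.univ_inter]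
  simp_rw [hfactor]
  rw [← Finset.prod_univ_sum t fun k a => q k a * if k ∈ s then g k a else 1]
  exact Finset.prod_eq_zero (Finset.mem_univ i) (by simpa [hi] using h)

theorem mul_pos_of_abs_sub_lt {c m S u v : ℝ} (hc : 0 < c) (hu : |u - m| < |m - S| / 2)
    (hv : |v - c * u| < c * (|m - S| / 2)) : 0 < (u - S) * (v - c * S) := by
  have huS : |m - S| / 2 < |u - S| := by
    linarith [abs_sub_le m u S, abs_sub_comm m u]
  have hvu : |v - c * u| < c * |u - S| := hv.trans (mul_lt_mul_of_pos_left huS hc)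
  have hpos : 0 < |u - S| := lt_of_le_of_lt (by positivity) huS
  calc 0 < |u - S| * (c * |u - S| - |v - c * u|) := mul_pos hpos (by linarith)
    _ = c * (u - S) ^ 2 - |(u - S) * (v - c * u)| := by rw [abs_mul, ← sq_abs (u - S)]; ring
    _ ≤ c * (u - S) ^ 2 + (u - S) * (v - c * u) := by
      linarith [neg_abs_le ((u - S) * (v - c * u))]
    _ = (u - S) * (v - c * S) := by ring

noncomputable def signVectors (n : ℕ) : Finset (Fin n → ℝ) :=
  Fintype.piFinset fun _ => {1, -1}

theorem mem_signVectors {n : ℕ} {x : Fin n → ℝ} :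
    x ∈ signVectors n ↔ ∀ i, x i = 1 ∨ x i = -1 := by
  simp [signVectors]

theorem sum_flip_mul_sub_eq_zero (p : ℝ) {a : ℝ} (ha : a = 1 ∨ a = -1) :
    ∑ b ∈ ({1, -1} : Finset ℝ), (if b = a then 1 - p else p) * (b - (1 - 2 * p) * a) = 0 := by
  rw [Finset.sum_pair (by norm_num)]
  rcases ha with rfl | rfl <;> norm_num <;> ring

theorem sum_signVectors_flip_mul_prod_eq_zero (p : ℝ) {n : ℕ} {x : Fin n → ℝ}
    (hx : x ∈ signVectors n) {s : Finset (Fin n)} (hs : s.Nonempty) :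
    ∑ y ∈ signVectors n, (∏ k, if y k = x k then 1 - p else p)
      * ∏ k ∈ s, (y k - (1 - 2 * p) * x k) = 0 := by
  obtain ⟨i, hi⟩ := hs
  exact Finset.sum_piFinset_prod_mul_prod_eq_zero _ (fun k b => if b = x k then 1 - p else p)
    (fun k b => b - (1 - 2 * p) * x k) hi
    (sum_flip_mul_sub_eq_zero p (mem_signVectors.1 hx i))

theorem sub_mul_mem_Icc_of_sign {p a b : ℝ} (hp0 : 0 ≤ p) (hp1 : p ≤ 1)
    (ha : a = 1 ∨ a = -1) (hb : b = 1 ∨ b = -1) : b - (1 - 2 * p) * a ∈ Set.Icc (-2) 2 := by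
  rcases ha with rfl | rfl <;> rcases hb with rfl | rfl <;> constructor <;> linarith

section Channel

variable {Ω : Type*} [MeasurableSpace Ω] {n : ℕ}

theorem memLp_apply_of_mem_signVectors {P : Measure Ω} [IsFiniteMeasure P] {X : Ω → Fin n → ℝ}
    (hX : ∀ ω, X ω ∈ signVectors n) (hXm : Measurable X) (i : Fin n) :
    MemLp (fun ω => X ω i) 2 P := by
  refine memLp_of_bounded (a := -1) (b := 1) (ae_of_all _ fun ω => ?_)
    hXm.eval.aestronglyMeasurable 2
  rcases mem_signVectors.1 (hX ω) i with h | h <;> rw [h] <;> norm_num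

structure IsBinarySymmetricChannel (P : Measure Ω) (p : ℝ) (X Y : Ω → Fin n → ℝ) : Prop where
  mem_X : ∀ ω, X ω ∈ signVectors n
  mem_Y : ∀ ω, Y ω ∈ signVectors n
  measurable_X : Measurable X
  measurable_Y : Measurable Y
  measureReal_eq : ∀ x ∈ signVectors n, ∀ y ∈ signVectors n,
    P.real {ω | X ω = x ∧ Y ω = y} = P.real {ω | X ω = x} * ∏ i, if y i = x i then 1 - p else p

namespace IsBinarySymmetricChannel

variable {P : Measure Ω} [IsProbabilityMeasure P] {p : ℝ} {X Y : Ω → Fin n → ℝ}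

theorem integral_eq_sum (h : IsBinarySymmetricChannel P p X Y)
    (f : (Fin n → ℝ) → (Fin n → ℝ) → ℝ) :
    ∫ ω, f (X ω) (Y ω) ∂P = ∑ x ∈ signVectors n, P.real {ω | X ω = x}
      * ∑ y ∈ signVectors n, (∏ i, if y i = x i then 1 - p else p) * f x y := by
  rw [integral_comp_eq_sum_of_mem (Z := fun ω => (X ω, Y ω))
    (h.measurable_X.prodMk h.measurable_Y) (s := signVectors n ×ˢ signVectors n)
    (fun ω => Finset.mem_product.2 ⟨h.mem_X ω, h.mem_Y ω⟩) (fun z => f z.1 z.2),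
    Finset.sum_product]
  refine Finset.sum_congr rfl fun x hx => ?_
  rw [Finset.mul_sum]
  refine Finset.sum_congr rfl fun y hy => ?_
  have hpre : (fun ω => (X ω, Y ω)) ⁻¹' {(x, y)} = {ω | X ω = x ∧ Y ω = y} := by
    ext ω; simp
  rw [hpre, h.measureReal_eq x hx y hy, mul_assoc]

theorem integral_prod_sub_eq_zero (h : IsBinarySymmetricChannel P p X Y)
    {s : Finset (Fin n)} (hs : s.Nonempty) :
    ∫ ω, ∏ k ∈ s, (Y ω k - (1 - 2 * p) * X ω k) ∂P = 0 := by
  rw [h.integral_eq_sum fun x y => ∏ k ∈ s, (y k - (1 - 2 * p) * x k)]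
  exact Finset.sum_eq_zero fun x hx => by
    rw [sum_signVectors_flip_mul_prod_eq_zero p hx hs, mul_zero]

theorem integral_sub_eq_zero (h : IsBinarySymmetricChannel P p X Y) (i : Fin n) :
    ∫ ω, (Y ω i - (1 - 2 * p) * X ω i) ∂P = 0 := by
  simpa using h.integral_prod_sub_eq_zero (Finset.singleton_nonempty i)

theorem memLp_sub (h : IsBinarySymmetricChannel P p X Y) (i : Fin n) :
    MemLp (fun ω => Y ω i - (1 - 2 * p) * X ω i) 2 P :=
  (memLp_apply_of_mem_signVectors h.mem_Y h.measurable_Y i).sub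
    ((memLp_apply_of_mem_signVectors h.mem_X h.measurable_X i).const_mul _)

theorem integral_mean_sub_eq_zero (h : IsBinarySymmetricChannel P p X Y) :
    ∫ ω, (∑ i, (Y ω i - (1 - 2 * p) * X ω i)) / n ∂P = 0 := by
  rw [integral_div, integral_finsetSum _ fun i _ => (h.memLp_sub i).integrable one_le_two]
  simp [h.integral_sub_eq_zero]

theorem variance_mean_sub_le (h : IsBinarySymmetricChannel P p X Y) (hp0 : 0 ≤ p)
    (hp1 : p ≤ 1) : Var[fun ω => (∑ i, (Y ω i - (1 - 2 * p) * X ω i)) / n; P] ≤ 4 / n := by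
  set w : Fin n → Ω → ℝ := fun i ω => Y ω i - (1 - 2 * p) * X ω i
  have hcov : Pairwise fun i j => cov[w i, w j; P] = 0 := by
    intro i j hij
    have hij' := h.integral_prod_sub_eq_zero (s := {i, j}) (Finset.insert_nonempty _ _)
    simp_rw [Finset.prod_pair hij] at hij'
    rw [covariance_eq_sub (h.memLp_sub i) (h.memLp_sub j)]
    simp only [Pi.mul_apply, hij', h.integral_sub_eq_zero, mul_zero, sub_zero]
  have hvar : ∀ i, Var[w i; P] ≤ 4 := fun i =>
    (variance_le_sq_of_bounded (ae_of_all _ fun ω => sub_mul_mem_Icc_of_sign hp0 hp1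
      (mem_signVectors.1 (h.mem_X ω) i) (mem_signVectors.1 (h.mem_Y ω) i))
      (h.memLp_sub i).aemeasurable).trans_eq (by norm_num)
  calc Var[fun ω => (∑ i, w i ω) / n; P]
      = (∑ i, Var[w i; P]) * ((n : ℝ)⁻¹) ^ 2 := by
        simp_rw [div_eq_mul_inv]
        rw [variance_mul_const,
          variance_fun_sum_of_pairwise_covariance_eq_zero h.memLp_sub hcov]
    _ ≤ (∑ _i : Fin n, 4) * ((n : ℝ)⁻¹) ^ 2 := by gcongr with i; exact hvar i
    _ = 4 / n := by
        rcases n.eq_zero_or_pos with rfl | hn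
        · simp
        · field_simp; simp

end IsBinarySymmetricChannel

theorem tendstoInMeasure_mean_sub_of_isBinarySymmetricChannel {P : Measure Ω}
    [IsProbabilityMeasure P] {p : ℝ} {X Y : (n : ℕ) → Ω → Fin n → ℝ}
    (h : ∀ n, IsBinarySymmetricChannel P p (X n) (Y n)) (hp0 : 0 ≤ p) (hp1 : p ≤ 1) :
    TendstoInMeasure P
      (fun n ω => (∑ i, Y n ω i) / n - (1 - 2 * p) * ((∑ i, X n ω i) / n)) atTop fun _ => 0 := by
  have hmean_sub : ∀ n ω, (∑ i, Y n ω i) / n - (1 - 2 * p) * ((∑ i, X n ω i) / n)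
      = (∑ i, (Y n ω i - (1 - 2 * p) * X n ω i)) / n := fun n ω => by
    rw [Finset.sum_sub_distrib, ← Finset.mul_sum, sub_div, mul_div_assoc]
  simp_rw [hmean_sub]
  exact tendstoInMeasure_const_of_tendsto_variance
    (fun n => memLp_sum_div (fun i _ => (h n).memLp_sub i) _)
    (by simp only [(h _).integral_mean_sub_eq_zero, tendsto_const_nhds])
    (squeeze_zero (fun _ => variance_nonneg _ _) (fun n => (h n).variance_mean_sub_le hp0 hp1)
      (tendsto_const_div_atTop_nhds_zero_nat 4))

end Channel

theorem supermajority_error_zero_of_mean_var_general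
    {Ω : Type*} [MeasurableSpace Ω] (P : Measure Ω) [IsProbabilityMeasure P]
    (p S : ℝ) (hp0 : 0 < p) (hp1 : p < 1 / 2)
    (X Y : (n : ℕ) → Ω → Fin n → ℝ)
    (hXval : ∀ n ω i, X n ω i = 1 ∨ X n ω i = -1)
    (hYval : ∀ n ω i, Y n ω i = 1 ∨ Y n ω i = -1)
    (hXmeas : ∀ n, Measurable (X n))
    (hYmeas : ∀ n, Measurable (Y n))
    (hjoint : ∀ n (x y : Fin n → ℝ), (∀ i, x i = 1 ∨ x i = -1) →
      (∀ i, y i = 1 ∨ y i = -1) →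
      (P {ω | X n ω = x ∧ Y n ω = y}).toReal
        = (P {ω | X n ω = x}).toReal * ∏ i, (if y i = x i then 1 - p else p))
    (μ : ℝ) (hμS : μ ≠ S)
    (hmean : Tendsto (fun n : ℕ => ∫ ω, (∑ i, X n ω i) / n ∂P) atTop (nhds μ))
    (hvar : Tendsto (fun n : ℕ => variance (fun ω => (∑ i, X n ω i) / n) P) atTop (nhds 0)) :
    Tendsto (fun n : ℕ =>
        (P {ω | ((∑ i, X n ω i) / n - S) * ((∑ i, Y n ω i) / n - (1 - 2 * p) * S) < 0}).toReal)
      atTop (nhds 0) := by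
  have hchannel : ∀ n, IsBinarySymmetricChannel P p (X n) (Y n) := fun n =>
    { mem_X := fun ω => mem_signVectors.2 (hXval n ω)
      mem_Y := fun ω => mem_signVectors.2 (hYval n ω)
      measurable_X := hXmeas n
      measurable_Y := hYmeas n
      measureReal_eq := fun x hx y hy =>
        hjoint n x y (mem_signVectors.1 hx) (mem_signVectors.1 hy) }
  have hc : 0 < 1 - 2 * p := by linarith
  have hd : 0 < |μ - S| / 2 := half_pos (abs_pos.2 (sub_ne_zero.2 hμS))
  have hXbar := tendstoInMeasure_const_of_tendsto_variance
    (fun n => memLp_sum_div (fun i _ =>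
      memLp_apply_of_mem_signVectors (hchannel n).mem_X (hXmeas n) i) (n : ℝ)) hmean hvar
  have hnoise :=
    tendstoInMeasure_mean_sub_of_isBinarySymmetricChannel hchannel hp0.le (by linarith)
  rw [tendstoInMeasure_iff_measureReal_norm] at hXbar hnoise
  have hsum := (hXbar _ hd).add (hnoise _ (mul_pos hc hd))
  rw [add_zero] at hsum
  refine squeeze_zero (fun _ => measureReal_nonneg) (fun n => ?_) hsum
  refine (measureReal_mono fun ω hω => ?_).trans (measureReal_union_le _ _)
  by_contra hgood
  simp only [Set.mem_union, Set.mem_ofPred_eq, not_or, not_le, Real.norm_eq_abs, sub_zero]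
    at hgood
  exact hω.not_ge (mul_pos_of_abs_sub_lt hc hgood.1 hgood.2).le

/-- In the sentiment detection model, if `lim_{n→∞} E[X̄_n] = μ ≠ S` and
`lim_{n→∞} Var[X̄_n] = 0`, then `lim_{n→∞} P_e^{(n)} = 0`. -/
theorem supermajority_error_zero_of_mean_var
    {Ω : Type*} [MeasurableSpace Ω] (P : Measure Ω) [IsProbabilityMeasure P]
    (p S : ℝ) (hp0 : 0 < p) (hp1 : p < 1 / 2) (hS0 : -1 < S) (hS1 : S < 1)
    (X Y : (n : ℕ) → Ω → Fin n → ℝ)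
    (hXval : ∀ n ω i, X n ω i = 1 ∨ X n ω i = -1)
    (hYval : ∀ n ω i, Y n ω i = 1 ∨ Y n ω i = -1)
    (hXmeas : ∀ n, Measurable (X n))
    (hYmeas : ∀ n, Measurable (Y n))
    (hjoint : ∀ n (x y : Fin n → ℝ), (∀ i, x i = 1 ∨ x i = -1) →
      (∀ i, y i = 1 ∨ y i = -1) →
      (P {ω | X n ω = x ∧ Y n ω = y}).toReal
        = (P {ω | X n ω = x}).toReal * ∏ i, (if y i = x i then 1 - p else p))
    (μ : ℝ) (hμS : μ ≠ S)
    (hmean : Tendsto (fun n : ℕ => ∫ ω, (∑ i, X n ω i) / n ∂P) atTop (nhds μ))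
    (hvar : Tendsto (fun n : ℕ => variance (fun ω => (∑ i, X n ω i) / n) P) atTop (nhds 0)) :
    Tendsto (fun n : ℕ =>
        (P {ω | ((∑ i, X n ω i) / n - S) * ((∑ i, Y n ω i) / n - (1 - 2 * p) * S) < 0}).toReal)
      atTop (nhds 0) :=
  supermajority_error_zero_of_mean_var_general P p S hp0 hp1 X Y hXval hYval hXmeas hYmeas hjoint μ
    hμS hmean hvar
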